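/- For a vector field X and smooth function f on a manifold, the Lie derivative of the second differential satisfies 𝓛_X(d²f) = d²(X(f)). -/

import Mathlib

/-- Partial derivative in the `i`-th coordinate direction on `ℝⁿ`. -/
noncomputable def pdi {n : ℕ} (i : Fin n) (f : (Fin n → ℝ) → ℝ) : (Fin n → ℝ) → ℝ :=
  fun x => fderiv ℝ f x (Pi.single i 1)

lemma contDiff_pdi {n : ℕ} (i : Fin n) {f : (Fin n → ℝ) → ℝ} (hf : ContDiff ℝ (⊤ : ℕ∞) f) :
    ContDiff ℝ (⊤ : ℕ∞) (pdi i f) :=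
  (hf.fderiv_right (m := (⊤ : ℕ∞)) (by simp)).clm_apply contDiff_const

lemma pdi_sum {n : ℕ} (i : Fin n) (g : Fin n → (Fin n → ℝ) → ℝ) (x : Fin n → ℝ)
    (hg : ∀ k, DifferentiableAt ℝ (g k) x) :
    pdi i (fun y => ∑ k, g k y) x = ∑ k, pdi i (g k) x := by
  unfold pdi
  rw [fderiv_fun_sum (fun k _ => hg k)]
  simp

lemma pdi_add {n : ℕ} (i : Fin n) (g h : (Fin n → ℝ) → ℝ) (x : Fin n → ℝ)
    (hg : DifferentiableAt ℝ g x) (hh : DifferentiableAt ℝ h x) :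
    pdi i (fun y => g y + h y) x = pdi i g x + pdi i h x := by
  unfold pdi; rw [fderiv_fun_add hg hh]; simp

lemma pdi_mul {n : ℕ} (i : Fin n) (g h : (Fin n → ℝ) → ℝ) (x : Fin n → ℝ)
    (hg : DifferentiableAt ℝ g x) (hh : DifferentiableAt ℝ h x) :
    pdi i (fun y => g y * h y) x = pdi i g x * h x + g x * pdi i h x := by
  unfold pdi
  rw [fderiv_fun_mul hg hh]
  simp [mul_comm]
  ring

lemma pdi_comm {n : ℕ} (i j : Fin n) {f : (Fin n → ℝ) → ℝ} (hf : ContDiff ℝ (⊤ : ℕ∞) f)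
    (x : Fin n → ℝ) : pdi i (pdi j f) x = pdi j (pdi i f) x := by
  have hd : DifferentiableAt ℝ (fderiv ℝ f) x :=
    ((hf.fderiv_right (m := (⊤ : ℕ∞)) (by simp)).differentiable (by simp)).differentiableAt
  have H : ∀ a b : Fin n, pdi a (pdi b f) x
      = fderiv ℝ (fderiv ℝ f) x (Pi.single a 1) (Pi.single b 1) := by
    intro a b
    show fderiv ℝ (fun y => (fderiv ℝ f y) (Pi.single b 1)) x (Pi.single a 1) = _
    rw [fderiv_clm_apply hd (differentiableAt_const _)]
    simp
  rw [H, H]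
  exact hf.contDiffAt.isSymmSndFDerivAt (by rw [minSmoothness_of_isRCLikeNormedField]; exact WithTop.coe_le_coe.mpr (le_top : (2 : ℕ∞) ≤ ⊤)) _ _

/-- First-order components of the Lie derivative `𝓛_X λ` of a codiffusor along `X`. -/
noncomputable def lieCod1 {n : ℕ} (X : (Fin n → ℝ) → Fin n → ℝ)
    (l1 : (Fin n → ℝ) → Fin n → ℝ) (i : Fin n) : (Fin n → ℝ) → ℝ :=
  fun x => (∑ k, X x k * pdi k (fun y => l1 y i) x)
    + ∑ k, l1 x k * pdi i (fun y => X y k) x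

/-- Second-order components of the Lie derivative `𝓛_X λ` of a codiffusor along `X`. -/
noncomputable def lieCod2 {n : ℕ} (X : (Fin n → ℝ) → Fin n → ℝ)
    (l1 : (Fin n → ℝ) → Fin n → ℝ) (l2 : (Fin n → ℝ) → Fin n → Fin n → ℝ)
    (i j : Fin n) : (Fin n → ℝ) → ℝ :=
  fun x => (∑ k, X x k * pdi k (fun y => l2 y i j) x)
    + (∑ k, l2 x i k * pdi j (fun y => X y k) x)
    + (∑ k, l2 x k j * pdi i (fun y => X y k) x)
    + ∑ k, l1 x k * pdi i (pdi j (fun y => X y k)) x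

/-- The Lie derivative of the second differential: `𝓛_X(d²f) = d²(X(f))`.
The codiffusor `d²f` has first-order components `∂ᵢf` and second-order components
`∂ᵢⱼf`, and `X(f) = φᵏ∂ₖf`. -/
theorem lie_derivative_second_differential {n : ℕ}
    (X : (Fin n → ℝ) → Fin n → ℝ) (f : (Fin n → ℝ) → ℝ)
    (hX : ∀ i, ContDiff ℝ (⊤ : ℕ∞) (fun x => X x i)) (hf : ContDiff ℝ (⊤ : ℕ∞) f) :
    (∀ i x, lieCod1 X (fun y i => pdi i f y) i x
        = pdi i (fun y => ∑ k, X y k * pdi k f y) x) ∧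
    (∀ i j x, lieCod2 X (fun y i => pdi i f y) (fun y i j => pdi i (pdi j f) y) i j x
        = pdi i (pdi j (fun y => ∑ k, X y k * pdi k f y)) x) := by
  have dA : ∀ {g : (Fin n → ℝ) → ℝ}, ContDiff ℝ (⊤ : ℕ∞) g → ∀ y, DifferentiableAt ℝ g y :=
    fun hg y => (hg.differentiable (by simp)).differentiableAt
  have hdf : ∀ k : Fin n, ContDiff ℝ (⊤ : ℕ∞) (pdi k f) := fun k => contDiff_pdi k hf
  have hddf : ∀ j k : Fin n, ContDiff ℝ (⊤ : ℕ∞) (pdi j (pdi k f)) :=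
    fun j k => contDiff_pdi j (hdf k)
  have hdX : ∀ j k : Fin n, ContDiff ℝ (⊤ : ℕ∞) (pdi j fun y => X y k) :=
    fun j k => contDiff_pdi j (hX k)
  -- the key first-order computation, as a pointwise identity
  have key1 : ∀ (j : Fin n) (y : Fin n → ℝ),
      pdi j (fun z => ∑ k, X z k * pdi k f z) y
        = ∑ k, (pdi j (fun z => X z k) y * pdi k f y + X y k * pdi j (pdi k f) y) := by
    intro j y
    rw [pdi_sum j (fun k z => X z k * pdi k f z) y
      (fun k => ((dA (hX k) y).mul (dA (hdf k) y)))]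
    exact Finset.sum_congr rfl fun k _ =>
      pdi_mul j _ _ y (dA (hX k) y) (dA (hdf k) y)
  constructor
  · intro i x
    rw [key1 i x]
    simp only [lieCod1]
    rw [Finset.sum_add_distrib, add_comm]
    congr 1
    · exact Finset.sum_congr rfl fun k _ => by ring
    · exact Finset.sum_congr rfl fun k _ => by
        rw [show pdi k (fun y => pdi i f y) x = pdi i (pdi k f) x from pdi_comm k i hf x]
  · intro i j x
    -- rewrite the inner function using key1
    have hfun : pdi j (fun z => ∑ k, X z k * pdi k f z)
        = fun y => ∑ k, (pdi j (fun z => X z k) y * pdi k f y + X y k * pdi j (pdi k f) y) :=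
      funext fun y => key1 j y
    rw [show pdi i (pdi j (fun z => ∑ k, X z k * pdi k f z)) x
        = pdi i (fun y => ∑ k, (pdi j (fun z => X z k) y * pdi k f y
            + X y k * pdi j (pdi k f) y)) x from by rw [hfun]]
    rw [pdi_sum i (fun k y => pdi j (fun z => X z k) y * pdi k f y + X y k * pdi j (pdi k f) y) x (fun k => ((dA (hdX j k) x).mul (dA (hdf k) x)).add
      ((dA (hX k) x).mul (dA (hddf j k) x)))]
    have expand : ∀ k : Fin n,
        pdi i (fun y => pdi j (fun z => X z k) y * pdi k f y
            + X y k * pdi j (pdi k f) y) x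
          = (pdi i (pdi j (fun z => X z k)) x * pdi k f x
            + pdi j (fun z => X z k) x * pdi i (pdi k f) x)
            + (pdi i (fun z => X z k) x * pdi j (pdi k f) x
            + X x k * pdi i (pdi j (pdi k f)) x) := by
      intro k
      rw [pdi_add i (fun y => pdi j (fun z => X z k) y * pdi k f y) (fun y => X y k * pdi j (pdi k f) y) x ((dA (hdX j k) x).mul (dA (hdf k) x))
        ((dA (hX k) x).mul (dA (hddf j k) x)),
        pdi_mul i _ _ x (dA (hdX j k) x) (dA (hdf k) x),
        pdi_mul i _ _ x (dA (hX k) x) (dA (hddf j k) x)]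
    rw [Finset.sum_congr rfl fun k _ => expand k]
    simp only [lieCod2]
    rw [← Finset.sum_add_distrib, ← Finset.sum_add_distrib, ← Finset.sum_add_distrib]
    refine Finset.sum_congr rfl fun k _ => ?_
    have c1 : pdi k (fun y => pdi i (pdi j f) y) x = pdi i (pdi j (pdi k f)) x := by
      rw [show pdi k (fun y => pdi i (pdi j f) y) x = pdi i (pdi k (pdi j f)) x from
        pdi_comm k i (hdf j) x]
      congr 1
      exact funext fun y => pdi_comm k j hf y
    have c2 : pdi k (pdi j f) x = pdi j (pdi k f) x := pdi_comm k j hf x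
    rw [c1, c2]
    ring
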